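/- Let φ, m : ℝ³ → ℝ be smooth functions of (x, y, t) with m_t nowhere vanishing, satisfying the Bogdanov system: (e^{−φ})_{tt} = m_t φ_{xy} − m_x φ_{yt} and m_{tt} e^{−φ} = m_x m_{yt} − m_t m_{xy}. Then the vector fields X₁ = ∂_x − (λ + m_x/m_t)∂_t + λ(φ_t (m_x/m_t) − φ_x)∂_λ and X₂ = ∂_y + (1/λ)(e^{−φ}/m_t)∂_t + ((e^{−φ})_t/m_t)∂_λ, defined on the open set {(x,y,t,λ) ∈ ℝ⁴ : λ ≠ 0}, commute at every point of that set. -/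

import Mathlib

noncomputable section

/-- Partial derivative of `f` along the `i`-th coordinate direction on `ℝⁿ`.
Coordinates on `ℝ³` are `(x, y, t) = (0, 1, 2)`; on `ℝ⁴` they are
`(x, y, t, λ) = (0, 1, 2, 3)`. -/
def pd {n : ℕ} (i : Fin n) (f : (Fin n → ℝ) → ℝ) : (Fin n → ℝ) → ℝ :=
  fun x => fderiv ℝ f x (Pi.single i 1)

/-- Projection `(x, y, t, λ) ↦ (x, y, t)`. -/
def π3 (p : Fin 4 → ℝ) : Fin 3 → ℝ := ![p 0, p 1, p 2]

/-- First Bogdanov equation: `(e^{−φ})_{tt} = m_t φ_{xy} − m_x φ_{yt}`. -/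
def Bogdanov1 (φ m : (Fin 3 → ℝ) → ℝ) : Prop :=
  ∀ x : Fin 3 → ℝ,
    pd 2 (pd 2 fun q => Real.exp (-(φ q))) x
      = pd 2 m x * pd 0 (pd 1 φ) x - pd 0 m x * pd 1 (pd 2 φ) x

/-- Second Bogdanov equation: `m_{tt} e^{−φ} = m_x m_{yt} − m_t m_{xy}`. -/
def Bogdanov2 (φ m : (Fin 3 → ℝ) → ℝ) : Prop :=
  ∀ x : Fin 3 → ℝ,
    pd 2 (pd 2 m) x * Real.exp (-(φ x))
      = pd 0 m x * pd 1 (pd 2 m) x - pd 2 m x * pd 0 (pd 1 m) x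

/-- `X₁ = ∂_x − (λ + m_x/m_t)∂_t + λ(φ_t m_x/m_t − φ_x)∂_λ`. -/
def bogLax1 (φ m : (Fin 3 → ℝ) → ℝ) : (Fin 4 → ℝ) → (Fin 4 → ℝ) :=
  fun p =>
    ![1, 0, -(p 3 + pd 0 m (π3 p) / pd 2 m (π3 p)),
      p 3 * (pd 2 φ (π3 p) * (pd 0 m (π3 p) / pd 2 m (π3 p)) - pd 0 φ (π3 p))]

/-- `X₂ = ∂_y + (1/λ)(e^{−φ}/m_t)∂_t + ((e^{−φ})_t/m_t)∂_λ`. -/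
def bogLax2 (φ m : (Fin 3 → ℝ) → ℝ) : (Fin 4 → ℝ) → (Fin 4 → ℝ) :=
  fun p =>
    ![0, 1, (1 / p 3) * (Real.exp (-(φ (π3 p))) / pd 2 m (π3 p)),
      pd 2 (fun q => Real.exp (-(φ q))) (π3 p) / pd 2 m (π3 p)]

/-!
Write `X₁ = ∂_x − (λ + u)∂_t + λh ∂_λ` and `X₂ = ∂_y + λ⁻¹k ∂_t + w ∂_λ`, where `u = m_x/m_t`,
`h = φ_t u − φ_x`, `k = e^{−φ}/m_t` and `w = (e^{−φ})_t/m_t` depend on `(x, y, t)` only. The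
`∂_x` and `∂_y` components of both fields are constant, so only the `∂_t` and `∂_λ` components
of `[X₁, X₂]` can be nonzero; each is a Laurent polynomial in `λ` whose coefficients are rational
expressions in the 2-jets of `φ` and `m`. Once `m_tt` and `φ_tt` are eliminated with the two
Bogdanov equations and mixed partials are identified, these coefficients vanish identically.
-/

open ContinuousLinearMap

theorem HasFDerivAt.fun_div {𝕜 E : Type*} [NontriviallyNormedField 𝕜] [NormedAddCommGroup E]
    [NormedSpace 𝕜 E] {c d : E → 𝕜} {c' d' : E →L[𝕜] 𝕜} {x : E}
    (hc : HasFDerivAt c c' x) (hd : HasFDerivAt d d' x) (hx : d x ≠ 0) :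
    HasFDerivAt (fun y => c y / d y) ((d x ^ 2)⁻¹ • (d x • c' - c x • d')) x := by
  simp_rw [div_eq_mul_inv]
  refine (hc.mul ((hasDerivAt_inv hx).comp_hasFDerivAt x hd)).congr_fderiv ?_
  ext v
  simp only [Function.comp_apply, add_apply, smul_apply, smul_eq_mul, sub_apply]
  field_simp
  ring

theorem DifferentiableAt.fderiv_apply_apply {𝕜 E F ι : Type*} [NontriviallyNormedField 𝕜]
    [NormedAddCommGroup E] [NormedSpace 𝕜 E] [NormedAddCommGroup F] [NormedSpace 𝕜 F]
    [Fintype ι] {Φ : E → ι → F} {x : E} (hΦ : DifferentiableAt 𝕜 Φ x) (v : E) (i : ι) :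
    fderiv 𝕜 Φ x v i = fderiv 𝕜 (fun y => Φ y i) x v := by
  rw [fderiv_apply hΦ]
  rfl

section PartialDerivative

variable {n : ℕ} {f g : (Fin n → ℝ) → ℝ} {x : Fin n → ℝ}

theorem contDiff_pd {k : WithTop ℕ∞} (hf : ContDiff ℝ (k + 1) f) (i : Fin n) :
    ContDiff ℝ k (pd i f) :=
  (hf.fderiv_right le_rfl).clm_apply contDiff_const

theorem pd_pd_eq_fderiv_fderiv (hf : DifferentiableAt ℝ (fderiv ℝ f) x) (i j : Fin n) :
    pd i (pd j f) x = fderiv ℝ (fderiv ℝ f) x (Pi.single i 1) (Pi.single j 1) := by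
  unfold pd
  rw [fderiv_clm_apply hf (differentiableAt_const _)]
  simp

theorem pd_comm (hf : ContDiffAt ℝ 2 f x) (i j : Fin n) :
    pd i (pd j f) x = pd j (pd i f) x := by
  have hf' : DifferentiableAt ℝ (fderiv ℝ f) x :=
    (hf.fderiv_right (m := 1) le_rfl).differentiableAt one_ne_zero
  rw [pd_pd_eq_fderiv_fderiv hf', pd_pd_eq_fderiv_fderiv hf',
    hf.isSymmSndFDerivAt (by simp)]

theorem pd_neg (i : Fin n) : pd i (fun y => -f y) x = -pd i f x := by
  simp [pd]

theorem pd_sub (hf : DifferentiableAt ℝ f x) (hg : DifferentiableAt ℝ g x) (i : Fin n) :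
    pd i (fun y => f y - g y) x = pd i f x - pd i g x := by
  simp [pd, fderiv_fun_sub hf hg]

theorem pd_mul (hf : DifferentiableAt ℝ f x) (hg : DifferentiableAt ℝ g x) (i : Fin n) :
    pd i (fun y => f y * g y) x = pd i f x * g x + f x * pd i g x := by
  simp only [pd, fderiv_fun_mul hf hg, add_apply, smul_apply, smul_eq_mul]
  ring

theorem pd_div (hf : DifferentiableAt ℝ f x) (hg : DifferentiableAt ℝ g x) (hgx : g x ≠ 0)
    (i : Fin n) :
    pd i (fun y => f y / g y) x = (pd i f x * g x - f x * pd i g x) / g x ^ 2 := by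
  simp only [pd, (hf.hasFDerivAt.fun_div hg.hasFDerivAt hgx).fderiv, smul_apply, sub_apply,
    smul_eq_mul]
  ring

theorem pd_exp (hf : DifferentiableAt ℝ f x) (i : Fin n) :
    pd i (fun y => Real.exp (f y)) x = Real.exp (f x) * pd i f x := by
  simp [pd, hf.hasFDerivAt.exp.fderiv]

theorem pd_exp_neg (hf : DifferentiableAt ℝ f x) (i : Fin n) :
    pd i (fun y => Real.exp (-f y)) x = -(Real.exp (-f x) * pd i f x) := by
  rw [pd_exp hf.fun_neg, pd_neg, mul_neg]

theorem pd_pd_exp_neg (hf : ContDiff ℝ 2 f) (i j : Fin n) (x : Fin n → ℝ) :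
    pd i (pd j fun y => Real.exp (-f y)) x
      = Real.exp (-f x) * (pd i f x * pd j f x - pd i (pd j f) x) := by
  have hf1 : Differentiable ℝ f := hf.differentiable two_ne_zero
  have hpd : pd j (fun y => Real.exp (-f y)) = fun y => -(Real.exp (-f y) * pd j f y) :=
    funext fun y => pd_exp_neg (hf1 y) j
  rw [hpd, pd_neg,
    pd_mul (hf1 x).fun_neg.exp ((contDiff_pd hf j).differentiable one_ne_zero x),
    pd_exp_neg (hf1 x)]
  ring

end PartialDerivative

def π3L : (Fin 4 → ℝ) →L[ℝ] (Fin 3 → ℝ) :=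
  pi fun j : Fin 3 => proj j.castSucc

theorem coe_π3L : ⇑π3L = π3 := by
  funext p j
  fin_cases j <;> rfl

theorem HasFDerivAt.comp_π3 {g : (Fin 3 → ℝ) → ℝ} {p : Fin 4 → ℝ}
    (hg : DifferentiableAt ℝ g (π3 p)) :
    HasFDerivAt (fun q => g (π3 q)) ((fderiv ℝ g (π3 p)).comp π3L) p := by
  rw [← coe_π3L] at hg ⊢
  exact hg.hasFDerivAt.comp p π3L.hasFDerivAt

theorem fderiv_apply_π3L (g : (Fin 3 → ℝ) → ℝ) (x : Fin 3 → ℝ) (v : Fin 4 → ℝ) :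
    fderiv ℝ g x (π3L v) = v 0 * pd 0 g x + v 1 * pd 1 g x + v 2 * pd 2 g x := by
  have hv : π3L v = v 0 • Pi.single 0 1 + v 1 • Pi.single 1 1 + v 2 • Pi.single 2 1 := by
    rw [coe_π3L]
    funext j
    fin_cases j <;> simp [π3]
  simp [hv, pd]

section LaxPair

variable {φ m : (Fin 3 → ℝ) → ℝ} {p : Fin 4 → ℝ}

/- `bogLax1 φ m p = ![1, 0, -(p 3 + laxU m (π3 p)), p 3 * laxH φ m (π3 p)]` and
`bogLax2 φ m p = ![0, 1, 1 / p 3 * laxK φ m (π3 p), laxW φ m (π3 p)]` hold by `rfl`. -/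
def laxU (m : (Fin 3 → ℝ) → ℝ) : (Fin 3 → ℝ) → ℝ :=
  fun x => pd 0 m x / pd 2 m x

def laxH (φ m : (Fin 3 → ℝ) → ℝ) : (Fin 3 → ℝ) → ℝ :=
  fun x => pd 2 φ x * laxU m x - pd 0 φ x

def laxK (φ m : (Fin 3 → ℝ) → ℝ) : (Fin 3 → ℝ) → ℝ :=
  fun x => Real.exp (-φ x) / pd 2 m x

def laxW (φ m : (Fin 3 → ℝ) → ℝ) : (Fin 3 → ℝ) → ℝ :=
  fun x => pd 2 (fun y => Real.exp (-φ y)) x / pd 2 m x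

theorem contDiff_laxU (hm : ContDiff ℝ 2 m) (hmt : ∀ x, pd 2 m x ≠ 0) :
    ContDiff ℝ 1 (laxU m) :=
  (contDiff_pd hm 0).div (contDiff_pd hm 2) hmt

theorem contDiff_laxH (hφ : ContDiff ℝ 2 φ) (hm : ContDiff ℝ 2 m) (hmt : ∀ x, pd 2 m x ≠ 0) :
    ContDiff ℝ 1 (laxH φ m) :=
  ((contDiff_pd hφ 2).mul (contDiff_laxU hm hmt)).sub (contDiff_pd hφ 0)

theorem contDiff_laxK (hφ : ContDiff ℝ 2 φ) (hm : ContDiff ℝ 2 m) (hmt : ∀ x, pd 2 m x ≠ 0) :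
    ContDiff ℝ 1 (laxK φ m) :=
  ((hφ.of_le (by norm_num)).neg.exp).div (contDiff_pd hm 2) hmt

theorem contDiff_laxW (hφ : ContDiff ℝ 2 φ) (hm : ContDiff ℝ 2 m) (hmt : ∀ x, pd 2 m x ≠ 0) :
    ContDiff ℝ 1 (laxW φ m) :=
  (contDiff_pd hφ.neg.exp 2).div (contDiff_pd hm 2) hmt

theorem pd_laxU (hm : ContDiff ℝ 2 m) (hmt : ∀ x, pd 2 m x ≠ 0) (i : Fin 3) (x : Fin 3 → ℝ) :
    pd i (laxU m) x
      = (pd i (pd 0 m) x * pd 2 m x - pd 0 m x * pd i (pd 2 m) x) / pd 2 m x ^ 2 :=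
  pd_div ((contDiff_pd hm 0).differentiable one_ne_zero x)
    ((contDiff_pd hm 2).differentiable one_ne_zero x) (hmt x) i

theorem pd_laxH (hφ : ContDiff ℝ 2 φ) (hm : ContDiff ℝ 2 m) (hmt : ∀ x, pd 2 m x ≠ 0)
    (i : Fin 3) (x : Fin 3 → ℝ) :
    pd i (laxH φ m) x
      = pd i (pd 2 φ) x * laxU m x + pd 2 φ x * pd i (laxU m) x - pd i (pd 0 φ) x := by
  have hφ' j : DifferentiableAt ℝ (pd j φ) x := (contDiff_pd hφ j).differentiable one_ne_zero x
  have hu : DifferentiableAt ℝ (laxU m) x := (contDiff_laxU hm hmt).differentiable one_ne_zero x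
  unfold laxH
  rw [pd_sub ((hφ' 2).fun_mul hu) (hφ' 0), pd_mul (hφ' 2) hu]

theorem pd_laxK (hφ : ContDiff ℝ 2 φ) (hm : ContDiff ℝ 2 m) (hmt : ∀ x, pd 2 m x ≠ 0)
    (i : Fin 3) (x : Fin 3 → ℝ) :
    pd i (laxK φ m) x = (-(Real.exp (-φ x) * pd i φ x) * pd 2 m x
      - Real.exp (-φ x) * pd i (pd 2 m) x) / pd 2 m x ^ 2 := by
  have hφ1 : DifferentiableAt ℝ φ x := hφ.differentiable two_ne_zero x
  unfold laxK
  rw [pd_div hφ1.fun_neg.exp ((contDiff_pd hm 2).differentiable one_ne_zero x) (hmt x),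
    pd_exp_neg hφ1]

theorem pd_laxW (hφ : ContDiff ℝ 2 φ) (hm : ContDiff ℝ 2 m) (hmt : ∀ x, pd 2 m x ≠ 0)
    (i : Fin 3) (x : Fin 3 → ℝ) :
    pd i (laxW φ m) x
      = (Real.exp (-φ x) * (pd i φ x * pd 2 φ x - pd i (pd 2 φ) x) * pd 2 m x
        + Real.exp (-φ x) * pd 2 φ x * pd i (pd 2 m) x) / pd 2 m x ^ 2 := by
  unfold laxW
  rw [pd_div ((contDiff_pd hφ.neg.exp 2).differentiable one_ne_zero x)
      ((contDiff_pd hm 2).differentiable one_ne_zero x) (hmt x),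
    pd_pd_exp_neg hφ, pd_exp_neg (hφ.differentiable two_ne_zero x)]
  ring

theorem Bogdanov1.pd_two_pd_two (h1 : Bogdanov1 φ m) (hφ : ContDiff ℝ 2 φ) (x : Fin 3 → ℝ) :
    pd 2 (pd 2 φ) x = pd 2 φ x ^ 2
      - (pd 2 m x * pd 0 (pd 1 φ) x - pd 0 m x * pd 1 (pd 2 φ) x) / Real.exp (-φ x) := by
  rw [← h1 x, pd_pd_exp_neg hφ, mul_div_cancel_left₀ _ (Real.exp_pos _).ne']
  ring

theorem Bogdanov2.pd_two_pd_two (h2 : Bogdanov2 φ m) (x : Fin 3 → ℝ) :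
    pd 2 (pd 2 m) x
      = (pd 0 m x * pd 1 (pd 2 m) x - pd 2 m x * pd 0 (pd 1 m) x) / Real.exp (-φ x) := by
  rw [eq_div_iff (Real.exp_pos _).ne']
  exact h2 x

theorem hasFDerivAt_bogLax1_two (hm : ContDiff ℝ 2 m) (hmt : ∀ x, pd 2 m x ≠ 0) :
    HasFDerivAt (fun q => bogLax1 φ m q 2)
      (-(proj 3 + (fderiv ℝ (laxU m) (π3 p)).comp π3L)) p :=
  ((hasFDerivAt_apply 3 p).add
    (HasFDerivAt.comp_π3 ((contDiff_laxU hm hmt).differentiable one_ne_zero _))).neg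

theorem hasFDerivAt_bogLax1_three (hφ : ContDiff ℝ 2 φ) (hm : ContDiff ℝ 2 m)
    (hmt : ∀ x, pd 2 m x ≠ 0) :
    HasFDerivAt (fun q => bogLax1 φ m q 3)
      (p 3 • (fderiv ℝ (laxH φ m) (π3 p)).comp π3L + laxH φ m (π3 p) • proj 3) p :=
  (hasFDerivAt_apply 3 p).mul
    (HasFDerivAt.comp_π3 ((contDiff_laxH hφ hm hmt).differentiable one_ne_zero _))

theorem hasFDerivAt_bogLax2_two (hφ : ContDiff ℝ 2 φ) (hm : ContDiff ℝ 2 m)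
    (hmt : ∀ x, pd 2 m x ≠ 0) (hp : p 3 ≠ 0) :
    HasFDerivAt (fun q => bogLax2 φ m q 2)
      ((1 / p 3) • (fderiv ℝ (laxK φ m) (π3 p)).comp π3L
        + laxK φ m (π3 p) • (-(p 3 ^ 2)⁻¹) • proj 3) p := by
  have hinv : HasFDerivAt (fun q : Fin 4 → ℝ => 1 / q 3)
      ((-(p 3 ^ 2)⁻¹) • (proj 3 : (Fin 4 → ℝ) →L[ℝ] ℝ)) p := by
    simpa only [one_div, Function.comp_def]
      using (hasDerivAt_inv hp).comp_hasFDerivAt p (hasFDerivAt_apply 3 p)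
  exact hinv.fun_mul
    (HasFDerivAt.comp_π3 ((contDiff_laxK hφ hm hmt).differentiable one_ne_zero _))

theorem hasFDerivAt_bogLax2_three (hφ : ContDiff ℝ 2 φ) (hm : ContDiff ℝ 2 m)
    (hmt : ∀ x, pd 2 m x ≠ 0) :
    HasFDerivAt (fun q => bogLax2 φ m q 3) ((fderiv ℝ (laxW φ m) (π3 p)).comp π3L) p :=
  HasFDerivAt.comp_π3 ((contDiff_laxW hφ hm hmt).differentiable one_ne_zero _)

theorem differentiableAt_bogLax1 (hφ : ContDiff ℝ 2 φ) (hm : ContDiff ℝ 2 m)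
    (hmt : ∀ x, pd 2 m x ≠ 0) : DifferentiableAt ℝ (bogLax1 φ m) p := by
  refine differentiableAt_pi.2 fun i => ?_
  fin_cases i
  exacts [differentiableAt_const _, differentiableAt_const _,
    (hasFDerivAt_bogLax1_two hm hmt).differentiableAt,
    (hasFDerivAt_bogLax1_three hφ hm hmt).differentiableAt]

theorem differentiableAt_bogLax2 (hφ : ContDiff ℝ 2 φ) (hm : ContDiff ℝ 2 m)
    (hmt : ∀ x, pd 2 m x ≠ 0) (hp : p 3 ≠ 0) : DifferentiableAt ℝ (bogLax2 φ m) p := by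
  refine differentiableAt_pi.2 fun i => ?_
  fin_cases i
  exacts [differentiableAt_const _, differentiableAt_const _,
    (hasFDerivAt_bogLax2_two hφ hm hmt hp).differentiableAt,
    (hasFDerivAt_bogLax2_three hφ hm hmt).differentiableAt]

theorem bogLax_bracket_two (hφ : ContDiff ℝ 2 φ) (hm : ContDiff ℝ 2 m)
    (hmt : ∀ x, pd 2 m x ≠ 0) (h2 : Bogdanov2 φ m) (hp : p 3 ≠ 0) :
    fderiv ℝ (fun q => bogLax2 φ m q 2) p (bogLax1 φ m p)
      - fderiv ℝ (fun q => bogLax1 φ m q 2) p (bogLax2 φ m p) = 0 := by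
  rw [(hasFDerivAt_bogLax2_two hφ hm hmt hp).fderiv, (hasFDerivAt_bogLax1_two hm hmt).fderiv]
  simp only [add_apply, neg_apply, smul_apply, coe_comp, Function.comp_apply, proj_apply,
    smul_eq_mul, fderiv_apply_π3L, pd_laxU hm hmt, pd_laxK hφ hm hmt]
  simp only [bogLax1, bogLax2, laxK, Matrix.cons_val]
  rw [pd_exp_neg (hφ.differentiable two_ne_zero _), pd_comm hm.contDiffAt 1 0,
    pd_comm hm.contDiffAt 2 0, h2.pd_two_pd_two]
  have hT := hmt (π3 p)
  field_simp
  ring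

theorem bogLax_bracket_three (hφ : ContDiff ℝ 2 φ) (hm : ContDiff ℝ 2 m)
    (hmt : ∀ x, pd 2 m x ≠ 0) (h1 : Bogdanov1 φ m) (h2 : Bogdanov2 φ m) (hp : p 3 ≠ 0) :
    fderiv ℝ (fun q => bogLax2 φ m q 3) p (bogLax1 φ m p)
      - fderiv ℝ (fun q => bogLax1 φ m q 3) p (bogLax2 φ m p) = 0 := by
  rw [(hasFDerivAt_bogLax2_three hφ hm hmt).fderiv, (hasFDerivAt_bogLax1_three hφ hm hmt).fderiv]
  simp only [add_apply, smul_apply, coe_comp, Function.comp_apply, proj_apply, smul_eq_mul,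
    fderiv_apply_π3L, pd_laxW hφ hm hmt, pd_laxH hφ hm hmt, pd_laxU hm hmt]
  simp only [bogLax1, bogLax2, laxH, laxU, Matrix.cons_val]
  rw [pd_exp_neg (hφ.differentiable two_ne_zero _), pd_comm hm.contDiffAt 1 0,
    pd_comm hm.contDiffAt 2 0, pd_comm hφ.contDiffAt 1 0, pd_comm hφ.contDiffAt 2 0,
    h2.pd_two_pd_two, h1.pd_two_pd_two hφ]
  have hT := hmt (π3 p)
  field_simp
  ring

end LaxPair

/-- For a smooth solution `(φ, m)` of the Bogdanov system with `m_t` nowhere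
vanishing, the Lax fields `X₁, X₂` commute at every point of `{λ ≠ 0}`. -/
theorem bogdanov_lax_commute
    (φ m : (Fin 3 → ℝ) → ℝ)
    (hφ : ContDiff ℝ (⊤ : ℕ∞) φ)
    (hm : ContDiff ℝ (⊤ : ℕ∞) m)
    (hmt : ∀ x : Fin 3 → ℝ, pd 2 m x ≠ 0)
    (h1 : Bogdanov1 φ m)
    (h2 : Bogdanov2 φ m) :
    ∀ p : Fin 4 → ℝ, p 3 ≠ 0 →
      fderiv ℝ (bogLax2 φ m) p (bogLax1 φ m p)
        - fderiv ℝ (bogLax1 φ m) p (bogLax2 φ m p) = 0 := by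
  intro p hp
  have hφ2 : ContDiff ℝ 2 φ := hφ.of_le (by norm_cast)
  have hm2 : ContDiff ℝ 2 m := hm.of_le (by norm_cast)
  ext i
  rw [Pi.sub_apply, (differentiableAt_bogLax2 hφ2 hm2 hmt hp).fderiv_apply_apply,
    (differentiableAt_bogLax1 hφ2 hm2 hmt).fderiv_apply_apply, Pi.zero_apply]
  fin_cases i
  · simp [bogLax1, bogLax2]
  · simp [bogLax1, bogLax2]
  · exact bogLax_bracket_two hφ2 hm2 hmt h2 hp
  · exact bogLax_bracket_three hφ2 hm2 hmt h1 h2 hp
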